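/- For positive integers m and even positive integer n, the alternating power sum T_m(n) = ∑_{l=0}^{n-1} (-1)^l l^m satisfies T_m(n) + (1/2) ∑_{l=0}^{m-1} C(m,l) E_l n^{m-l} = 0, where E_l are Euler numbers. -/

import Mathlib

/-- The Euler polynomials, defined by the recurrence
`E_n(x) = x^n - (1/2) * ∑_{k<n} C(n,k) E_k(x)`,
equivalent to the generating function `2 e^{xt}/(e^t+1) = ∑ E_n(x) t^n/n!`. -/
noncomputable def eulerPoly : ℕ → Polynomial ℚ := fun n =>
  n.strongRecOn fun n ih =>
    Polynomial.X ^ n - Polynomial.C (1/2 : ℚ) *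
      ∑ k : Fin n, Polynomial.C ((n.choose k : ℚ)) * ih k k.2

/-- The Euler numbers `E_n = E_n(0)`, i.e. with EGF `2/(e^t+1)`. -/
noncomputable def eulerNumber (n : ℕ) : ℚ := (eulerPoly n).eval 0

/-!
The Euler polynomials form an Appell sequence (`E_{n+1}' = (n+1) E_n`, `deg E_n ≤ n`), so Taylor
expansion gives `E_n(x + y) = ∑ C(n,k) E_k(x) y^(n-k)`. Taking `y = 1` and comparing with the
defining recurrence yields `E_m(x + 1) + E_m(x) = 2 x^m`, hence `2 (-1)^l l^m` telescopes and
`2 T_m(n) = E_m(0) - (-1)^n E_m(n)`. For even `n`, expanding `E_m(n)` at `x = 0` gives the claim.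
-/

open Polynomial Finset

section Appell

variable {K : Type*} [Field K] [CharZero K] {p : ℕ → K[X]}

theorem iterate_derivative_of_derivative_succ (h0 : derivative (p 0) = 0)
    (hder : ∀ n, derivative (p (n + 1)) = C ((n + 1 : ℕ) : K) * p n) (k n : ℕ) :
    derivative^[k] (p n) = C (n.descFactorial k : K) * p (n - k) := by
  induction k generalizing n with
  | zero => simp
  | succ k ih =>
    rw [Function.iterate_succ_apply]
    cases n with
    | zero => simp [h0]
    | succ n =>
      rw [hder, iterate_derivative_C_mul, ih, ← mul_assoc, ← C_mul, Nat.succ_sub_succ,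
        Nat.succ_descFactorial_succ]
      push_cast
      ring

theorem hasseDeriv_of_derivative_succ (h0 : derivative (p 0) = 0)
    (hder : ∀ n, derivative (p (n + 1)) = C ((n + 1 : ℕ) : K) * p n) (k n : ℕ) :
    hasseDeriv k (p n) = C (n.choose k : K) * p (n - k) := by
  have h := congrFun (factorial_smul_hasseDeriv (R := K) k) (p n)
  rw [iterate_derivative_of_derivative_succ h0 hder, LinearMap.smul_apply,
    Nat.descFactorial_eq_factorial_mul_choose, nsmul_eq_mul, Nat.cast_mul, C_mul, C_eq_natCast,
    mul_assoc] at h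
  exact mul_left_cancel₀ (by exact_mod_cast k.factorial_ne_zero) h

theorem eval_add_of_derivative_succ (hdeg : ∀ n, (p n).natDegree ≤ n)
    (hder : ∀ n, derivative (p (n + 1)) = C ((n + 1 : ℕ) : K) * p n) (n : ℕ) (x y : K) :
    (p n).eval (x + y) = ∑ k ∈ range (n + 1), (n.choose k : K) * (p k).eval x * y ^ (n - k) := by
  have h0 : derivative (p 0) = 0 := derivative_of_natDegree_zero (Nat.le_zero.1 (hdeg 0))
  have hlt : (taylor x (p n)).natDegree < n + 1 := by
    rw [natDegree_taylor]; exact Nat.lt_succ_of_le (hdeg n)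
  rw [add_comm, ← taylor_eval, eval_eq_sum_range' hlt, ← sum_range_reflect]
  refine sum_congr rfl fun k hk => ?_
  have hk : k ≤ n := Nat.lt_succ_iff.1 (mem_range.1 hk)
  rw [taylor_coeff, hasseDeriv_of_derivative_succ h0 hder, eval_mul, eval_C, Nat.succ_sub_one,
    Nat.sub_sub_self hk, Nat.choose_symm hk]

end Appell

theorem eulerPoly_eq (n : ℕ) : eulerPoly n =
    X ^ n - C (1 / 2 : ℚ) * ∑ k ∈ range n, C (n.choose k : ℚ) * eulerPoly k := by
  rw [eulerPoly, Nat.strongRecOn_eq,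
    ← Fin.sum_univ_eq_sum_range (fun k => C (n.choose k : ℚ) * eulerPoly k)]
  rfl

theorem eval_eulerPoly (n : ℕ) (x : ℚ) : (eulerPoly n).eval x =
    x ^ n - 1 / 2 * ∑ k ∈ range n, (n.choose k : ℚ) * (eulerPoly k).eval x := by
  rw [eulerPoly_eq]
  simp [eval_finsetSum]

@[simp]
theorem eulerPoly_zero : eulerPoly 0 = 1 := by
  rw [eulerPoly_eq]
  simp

theorem natDegree_eulerPoly_le (n : ℕ) : (eulerPoly n).natDegree ≤ n := by
  induction n using Nat.strong_induction_on with
  | _ n ih =>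
    rw [eulerPoly_eq]
    refine (natDegree_sub_le _ _).trans (max_le (natDegree_X_pow_le n) ?_)
    refine (natDegree_C_mul_le _ _).trans (natDegree_sum_le_of_forall_le _ _ fun k hk => ?_)
    exact (natDegree_C_mul_le _ _).trans ((ih k (mem_range.1 hk)).trans (mem_range.1 hk).le)

theorem derivative_eulerPoly_succ (n : ℕ) :
    derivative (eulerPoly (n + 1)) = C ((n + 1 : ℕ) : ℚ) * eulerPoly n := by
  induction n using Nat.strong_induction_on with
  | _ n ih =>
    have hterm : ∀ i ∈ range n, C ((n + 1).choose (i + 1) : ℚ) * derivative (eulerPoly (i + 1))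
        = C ((n + 1 : ℕ) : ℚ) * (C (n.choose i : ℚ) * eulerPoly i) := by
      intro i hi
      rw [ih i (mem_range.1 hi), ← mul_assoc, ← mul_assoc, ← C_mul, ← C_mul]
      congr 2
      exact_mod_cast (Nat.add_one_mul_choose_eq n i).symm
    rw [eulerPoly_eq (n + 1), derivative_sub, derivative_X_pow, derivative_C_mul, derivative_sum,
      sum_range_succ']
    simp only [derivative_C_mul, eulerPoly_zero, derivative_one, mul_zero, add_zero]
    rw [sum_congr rfl hterm, ← mul_sum, eulerPoly_eq n]
    push_cast
    ring

theorem eval_eulerPoly_add (n : ℕ) (x y : ℚ) : (eulerPoly n).eval (x + y) =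
    ∑ k ∈ range (n + 1), (n.choose k : ℚ) * (eulerPoly k).eval x * y ^ (n - k) :=
  eval_add_of_derivative_succ natDegree_eulerPoly_le derivative_eulerPoly_succ n x y

theorem eval_eulerPoly_add_one_add (n : ℕ) (x : ℚ) :
    (eulerPoly n).eval (x + 1) + (eulerPoly n).eval x = 2 * x ^ n := by
  rw [eval_eulerPoly_add, sum_range_succ, Nat.choose_self, eval_eulerPoly n x]
  simp only [one_pow, mul_one]
  ring

theorem eval_eulerPoly_eq_sum_eulerNumber (n : ℕ) (y : ℚ) : (eulerPoly n).eval y =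
    ∑ k ∈ range (n + 1), (n.choose k : ℚ) * eulerNumber k * y ^ (n - k) := by
  simpa [eulerNumber] using eval_eulerPoly_add n 0 y

theorem two_mul_sum_range_neg_one_pow_mul_pow (m n : ℕ) :
    2 * ∑ l ∈ range n, (-1 : ℚ) ^ l * (l : ℚ) ^ m =
      eulerNumber m - (-1) ^ n * (eulerPoly m).eval (n : ℚ) := by
  let f : ℕ → ℚ := fun l => (-1) ^ l * (eulerPoly m).eval (l : ℚ)
  have hterm (l : ℕ) : 2 * ((-1 : ℚ) ^ l * (l : ℚ) ^ m) = f l - f (l + 1) := by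
    have := eval_eulerPoly_add_one_add m l
    simp only [f, pow_succ, Nat.cast_succ]
    linear_combination -(-1 : ℚ) ^ l * this
  rw [mul_sum, sum_congr rfl fun l _ => hterm l, sum_range_sub']
  simp [f, eulerNumber]

theorem stmt_2_general (m n : ℕ) (hne : Even n) :
    (∑ l ∈ Finset.range n, (-1 : ℚ) ^ l * (l : ℚ) ^ m) +
      (1/2) * ∑ l ∈ Finset.range m, (m.choose l : ℚ) * eulerNumber l * (n : ℚ) ^ (m - l) = 0 := by
  have h := two_mul_sum_range_neg_one_pow_mul_pow m n
  rw [hne.neg_one_pow, one_mul, eval_eulerPoly_eq_sum_eulerNumber, sum_range_succ,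
    Nat.choose_self, Nat.sub_self] at h
  linear_combination h / 2

theorem stmt_2 (m n : ℕ) (hm : 0 < m) (hn : 0 < n) (hne : Even n) :
    (∑ l ∈ Finset.range n, (-1 : ℚ) ^ l * (l : ℚ) ^ m) +
      (1/2) * ∑ l ∈ Finset.range m, (m.choose l : ℚ) * eulerNumber l * (n : ℚ) ^ (m - l) = 0 :=
  stmt_2_general m n hne
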